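/- Let R > 0, r > 0, and let y₀ ∈ ℝ² with ‖y₀‖ = d, where |R − r| < d < R + r. Define φ = arccos((d² + r² − R²)/(2dr)) and ψ = arccos((R² + d² − r²)/(2dR)). Then the two-dimensional Lebesgue measure of the intersection of the closed ball of radius R centered at the origin with the closed ball of radius r centered at y₀ equals φ·r² + ψ·R² − d·R·sin(ψ). Consequently, the uniform probability measure on the ball of radius R centered at the origin assigns to the ball of radius r centered at y₀ the probability φ·r²/(πR²) + ψ/π − (d/(πR))·sin(ψ). -/

import Mathlib

/-!
Reflecting the plane, we may take `y₀ = (d, 0)`. The radical line `x = c`, where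
`2 d c = d² + R² - r²`, cuts the lens into the segment `x ≥ c` of the disk of radius `R` and the
segment `x ≤ c` of the disk of radius `r`. By Fubini the segment `x ≥ a` of a disk of radius `ρ`
has area `∫_a^ρ 2 √(ρ² - x²) dx = ρ² arccos (a / ρ) - a √(ρ² - a²)`, an antiderivative being
`x √(ρ² - x²) + ρ² arcsin (x / ρ)`. Both segments have the half-chord `√(R² - c²) = R sin ψ`,
so the two correction terms add up to `d R sin ψ`. Dividing by `π R²` gives the probability.
-/

open MeasureTheory Real Set Metric

noncomputable def uniformOnBall (R : ℝ) : Measure (EuclideanSpace ℝ (Fin 2)) :=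
  (volume (Metric.closedBall (0 : EuclideanSpace ℝ (Fin 2)) R))⁻¹ •
    volume.restrict (Metric.closedBall (0 : EuclideanSpace ℝ (Fin 2)) R)

section CircularSegment

variable {ρ : ℝ}

theorem hasDerivAt_mul_sqrt_sq_sub_sq_add_arcsin (hρ : 0 < ρ) {x : ℝ} (hx : x ∈ Ioo (-ρ) ρ) :
    HasDerivAt (fun x => x * √(ρ ^ 2 - x ^ 2) + ρ ^ 2 * arcsin (x / ρ))
      (2 * √(ρ ^ 2 - x ^ 2)) x := by
  have hpos : 0 < ρ ^ 2 - x ^ 2 := by nlinarith [hx.1, hx.2]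
  have hsqrt :
      HasDerivAt (fun x => √(ρ ^ 2 - x ^ 2)) (-(2 * x) / (2 * √(ρ ^ 2 - x ^ 2))) x := by
    simpa using ((hasDerivAt_pow 2 x).const_sub (ρ ^ 2)).sqrt hpos.ne'
  have harcsin :
      HasDerivAt (fun x => arcsin (x / ρ)) (1 / √(1 - (x / ρ) ^ 2) * (1 / ρ)) x := by
    have hne : x / ρ ≠ -1 ∧ x / ρ ≠ 1 := by
      constructor <;> intro h <;> rw [div_eq_iff hρ.ne'] at h <;> linarith [hx.1, hx.2]
    exact (hasDerivAt_arcsin hne.1 hne.2).comp x ((hasDerivAt_id x).div_const ρ)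
  refine (((hasDerivAt_id' x).mul hsqrt).add (harcsin.const_mul (ρ ^ 2))).congr_deriv ?_
  rw [show 1 - (x / ρ) ^ 2 = (ρ ^ 2 - x ^ 2) / ρ ^ 2 by field_simp, sqrt_div hpos.le,
    sqrt_sq hρ.le]
  have hs := sq_sqrt hpos.le
  field_simp
  linear_combination -hs

theorem integral_two_mul_sqrt_sq_sub_sq (hρ : 0 < ρ) {a : ℝ} (ha : a ∈ Icc (-ρ) ρ) :
    ∫ x in a..ρ, 2 * √(ρ ^ 2 - x ^ 2) = ρ ^ 2 * arccos (a / ρ) - a * √(ρ ^ 2 - a ^ 2) := by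
  rw [intervalIntegral.integral_eq_sub_of_hasDerivAt_of_le ha.2 (by fun_prop)
    (fun x hx => hasDerivAt_mul_sqrt_sq_sub_sq_add_arcsin hρ ⟨ha.1.trans_lt hx.1, hx.2⟩)
    (by apply Continuous.intervalIntegrable; fun_prop)]
  simp [div_self hρ.ne', arccos_eq_pi_div_two_sub_arcsin]
  ring

end CircularSegment

theorem volume_setOf_sq_le (m : ℝ) :
    volume {y : ℝ | y ^ 2 ≤ m} = ENNReal.ofReal (2 * √m) := by
  rcases le_or_gt 0 m with hm | hm
  · have : {y : ℝ | y ^ 2 ≤ m} = Icc (-√m) √m := by ext y; exact sq_le hm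
    rw [this, volume_Icc]
    ring_nf
  · have : {y : ℝ | y ^ 2 ≤ m} = ∅ := by
      ext y; simpa using hm.trans_le (sq_nonneg y)
    simp [this, sqrt_eq_zero'.mpr hm.le]

theorem volume_setOf_snd_sq_le {g : ℝ → ℝ} (hg : Measurable g) :
    volume {p : ℝ × ℝ | p.2 ^ 2 ≤ g p.1} = ∫⁻ x, ENNReal.ofReal (2 * √(g x)) := by
  rw [Measure.volume_eq_prod, Measure.prod_apply (measurableSet_le (by fun_prop) (by fun_prop))]
  simp_rw [← volume_setOf_sq_le]
  rfl

section Lens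

variable {R r d c : ℝ}

noncomputable def lensWidth (R r d x : ℝ) : ℝ :=
  2 * √(min (R ^ 2 - x ^ 2) (r ^ 2 - (x - d) ^ 2))

theorem continuous_lensWidth : Continuous (lensWidth R r d) := by
  unfold lensWidth; fun_prop

theorem support_lensWidth_subset (hR : 0 ≤ R) (hr : 0 ≤ r) :
    Function.support (lensWidth R r d) ⊆ Ioc (d - r) R := by
  intro x hx
  by_contra hx'
  have : R ^ 2 ≤ x ^ 2 ∨ r ^ 2 ≤ (x - d) ^ 2 := by
    rcases not_and_or.mp hx' with h | h
    · right; nlinarith [not_lt.mp h]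
    · left; nlinarith [not_le.mp h]
  exact hx (by simpa [lensWidth, sqrt_eq_zero'] using this)

theorem integrable_lensWidth (hR : 0 ≤ R) (hr : 0 ≤ r) : Integrable (lensWidth R r d) :=
  continuous_lensWidth.integrable_of_hasCompactSupport <|
    HasCompactSupport.intro' isCompact_Icc isClosed_Icc fun _ hx =>
      Function.notMem_support.mp fun h =>
        hx (Ioc_subset_Icc_self (support_lensWidth_subset hR hr h))

theorem integral_lensWidth (hR : 0 < R) (hr : 0 < r) (hd : 0 < d)
    (hc : 2 * d * c = d ^ 2 + R ^ 2 - r ^ 2) (hcR : c ∈ Icc (-R) R)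
    (hcr : d - c ∈ Icc (-r) r) :
    ∫ x, lensWidth R r d x =
      (R ^ 2 * arccos (c / R) - c * √(R ^ 2 - c ^ 2)) +
        (r ^ 2 * arccos ((d - c) / r) - (d - c) * √(r ^ 2 - (d - c) ^ 2)) := by
  -- the two bounds in the minimum cross on the radical line `x = c`
  have hcross (x : ℝ) : (R ^ 2 - x ^ 2) - (r ^ 2 - (x - d) ^ 2) = 2 * d * (c - x) := by
    linear_combination -hc
  have hleft :
      EqOn (lensWidth R r d) (fun x => 2 * √(r ^ 2 - (d - x) ^ 2)) (uIcc (d - r) c) := by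
    intro x hx
    rw [uIcc_of_le (by linarith [hcr.2])] at hx
    have : 2 * d * x ≤ 2 * d * c := mul_le_mul_of_nonneg_left hx.2 (by positivity)
    rw [lensWidth, min_eq_right (by linarith [hcross x]), sub_sq_comm x d]
  have hright : EqOn (lensWidth R r d) (fun x => 2 * √(R ^ 2 - x ^ 2)) (uIcc c R) := by
    intro x hx
    rw [uIcc_of_le hcR.2] at hx
    have : 2 * d * c ≤ 2 * d * x := mul_le_mul_of_nonneg_left hx.1 (by positivity)
    rw [lensWidth, min_eq_left (by linarith [hcross x])]
  calc ∫ x, lensWidth R r d x = ∫ x in (d - r)..R, lensWidth R r d x :=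
        (intervalIntegral.integral_eq_integral_of_support_subset
          (support_lensWidth_subset hR.le hr.le)).symm
    _ = (∫ x in (d - r)..c, lensWidth R r d x) + ∫ x in c..R, lensWidth R r d x :=
        (intervalIntegral.integral_add_adjacent_intervals
          (continuous_lensWidth.intervalIntegrable _ _)
          (continuous_lensWidth.intervalIntegrable _ _)).symm
    _ = (∫ x in (d - r)..c, 2 * √(r ^ 2 - (d - x) ^ 2)) +
          ∫ x in c..R, 2 * √(R ^ 2 - x ^ 2) := by
        rw [intervalIntegral.integral_congr hleft, intervalIntegral.integral_congr hright]
    _ = _ := by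
        rw [intervalIntegral.integral_comp_sub_left (fun x => 2 * √(r ^ 2 - x ^ 2)),
          sub_sub_cancel, integral_two_mul_sqrt_sq_sub_sq hr hcr,
          integral_two_mul_sqrt_sq_sub_sq hR hcR]
        ring

theorem segmentAreas_add_eq (hR : 0 < R) (hr : 0 < r) (hd : 0 < d)
    (hc : 2 * d * c = d ^ 2 + R ^ 2 - r ^ 2) :
    (R ^ 2 * arccos (c / R) - c * √(R ^ 2 - c ^ 2)) +
        (r ^ 2 * arccos ((d - c) / r) - (d - c) * √(r ^ 2 - (d - c) ^ 2)) =
      arccos ((d ^ 2 + r ^ 2 - R ^ 2) / (2 * d * r)) * r ^ 2 +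
        arccos ((R ^ 2 + d ^ 2 - r ^ 2) / (2 * d * R)) * R ^ 2 -
        d * R * sin (arccos ((R ^ 2 + d ^ 2 - r ^ 2) / (2 * d * R))) := by
  have hcos_R : c / R = (R ^ 2 + d ^ 2 - r ^ 2) / (2 * d * R) := by
    rw [div_eq_div_iff (by positivity) (by positivity)]; linear_combination R * hc
  have hcos_r : (d - c) / r = (d ^ 2 + r ^ 2 - R ^ 2) / (2 * d * r) := by
    rw [div_eq_div_iff (by positivity) (by positivity)]; linear_combination -r * hc
  have hchord : r ^ 2 - (d - c) ^ 2 = R ^ 2 - c ^ 2 := by linear_combination hc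
  have hsin : R * sin (arccos (c / R)) = √(R ^ 2 - c ^ 2) := by
    have : R ^ 2 * (1 - (c / R) ^ 2) = R ^ 2 - c ^ 2 := by field_simp
    rw [sin_arccos, ← this, sqrt_mul (sq_nonneg R), sqrt_sq hR.le]
  rw [← hcos_R, ← hcos_r, hchord, mul_assoc d, hsin]
  ring

theorem volume_lens (hR : 0 < R) (hr : 0 < r) (hlo : |R - r| < d) (hhi : d < R + r) :
    volume {p : ℝ × ℝ | p.1 ^ 2 + p.2 ^ 2 ≤ R ^ 2 ∧ (p.1 - d) ^ 2 + p.2 ^ 2 ≤ r ^ 2} =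
      ENNReal.ofReal (arccos ((d ^ 2 + r ^ 2 - R ^ 2) / (2 * d * r)) * r ^ 2 +
        arccos ((R ^ 2 + d ^ 2 - r ^ 2) / (2 * d * R)) * R ^ 2 -
        d * R * sin (arccos ((R ^ 2 + d ^ 2 - r ^ 2) / (2 * d * R)))) := by
  obtain ⟨hRr, hrR⟩ := abs_lt.mp hlo
  have hd : 0 < d := (abs_nonneg _).trans_lt hlo
  obtain ⟨c, hc⟩ : ∃ c, 2 * d * c = d ^ 2 + R ^ 2 - r ^ 2 :=
    ⟨(d ^ 2 + R ^ 2 - r ^ 2) / (2 * d), by field_simp⟩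
  have hcR : c ∈ Icc (-R) R := by constructor <;> nlinarith
  have hcr : d - c ∈ Icc (-r) r := by constructor <;> nlinarith
  have hset : {p : ℝ × ℝ | p.1 ^ 2 + p.2 ^ 2 ≤ R ^ 2 ∧ (p.1 - d) ^ 2 + p.2 ^ 2 ≤ r ^ 2} =
      {p | p.2 ^ 2 ≤ min (R ^ 2 - p.1 ^ 2) (r ^ 2 - (p.1 - d) ^ 2)} := by
    ext p
    simp only [mem_ofPred_eq, le_min_iff]
    constructor <;> rintro ⟨h₁, h₂⟩ <;> constructor <;> linarith
  rw [hset, volume_setOf_snd_sq_le (g := fun x => min (R ^ 2 - x ^ 2) (r ^ 2 - (x - d) ^ 2))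
    (by fun_prop)]
  change ∫⁻ x, ENNReal.ofReal (lensWidth R r d x) = _
  rw [← ofReal_integral_eq_lintegral_ofReal (integrable_lensWidth hR.le hr.le)
    (.of_forall fun x => by unfold lensWidth; positivity), integral_lensWidth hR hr hd hc hcR hcr,
    segmentAreas_add_eq hR hr hd hc]

end Lens

theorem volume_closedBall_zero_inter_closedBall_eq_of_norm_eq {E : Type*} [NormedAddCommGroup E]
    [InnerProductSpace ℝ E] [FiniteDimensional ℝ E] [MeasurableSpace E] [BorelSpace E]
    {y y' : E} (h : ‖y‖ = ‖y'‖) (R r : ℝ) :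
    volume (closedBall (0 : E) R ∩ closedBall y r) =
      volume (closedBall (0 : E) R ∩ closedBall y' r) := by
  set T := (ℝ ∙ (y - y'))ᗮ.reflection
  have hT : T.symm y = y' := by rw [Submodule.reflection_symm, Submodule.reflection_sub h]
  rw [← T.measurePreserving.measure_preimage
    (measurableSet_closedBall.inter measurableSet_closedBall).nullMeasurableSet (s := _ ∩ _),
    preimage_inter, T.preimage_closedBall, T.preimage_closedBall, map_zero, hT]

theorem mem_closedBall_fin_two_iff {x z : EuclideanSpace ℝ (Fin 2)} {ρ : ℝ} (hρ : 0 ≤ ρ) :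
    z ∈ closedBall x ρ ↔ (z 0 - x 0) ^ 2 + (z 1 - x 1) ^ 2 ≤ ρ ^ 2 := by
  rw [mem_closedBall, EuclideanSpace.dist_eq, Fin.sum_univ_two, sqrt_le_left hρ, dist_eq, dist_eq,
    sq_abs, sq_abs]

theorem volume_closedBall_zero_inter_closedBall_fin_two {R r : ℝ} (hR : 0 ≤ R) (hr : 0 ≤ r)
    (d : ℝ) :
    volume (closedBall (0 : EuclideanSpace ℝ (Fin 2)) R ∩ closedBall !₂[d, 0] r) =
      volume {p : ℝ × ℝ | p.1 ^ 2 + p.2 ^ 2 ≤ R ^ 2 ∧ (p.1 - d) ^ 2 + p.2 ^ 2 ≤ r ^ 2} := by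
  have hG : MeasurePreserving (fun z : EuclideanSpace ℝ (Fin 2) => (z 0, z 1)) :=
    (volume_preserving_finTwoArrow ℝ).comp (PiLp.volume_preserving_ofLp (Fin 2))
  have hS : MeasurableSet
      {p : ℝ × ℝ | p.1 ^ 2 + p.2 ^ 2 ≤ R ^ 2 ∧ (p.1 - d) ^ 2 + p.2 ^ 2 ≤ r ^ 2} := by
    measurability
  rw [← hG.measure_preimage hS.nullMeasurableSet]
  congr 1 with z
  simp [mem_closedBall_fin_two_iff hR, mem_closedBall_fin_two_iff hr]

theorem uniformOnBall_apply {R : ℝ} (hR : 0 ≤ R) (s : Set (EuclideanSpace ℝ (Fin 2))) :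
    uniformOnBall R s = volume (closedBall 0 R ∩ s) / ENNReal.ofReal (π * R ^ 2) := by
  rw [uniformOnBall, Measure.smul_apply, Measure.restrict_apply' measurableSet_closedBall,
    EuclideanSpace.volume_closedBall_fin_two, ← ENNReal.ofReal_pow hR,
    ← ENNReal.ofReal_mul (by positivity), smul_eq_mul, ENNReal.div_eq_inv_mul, inter_comm,
    mul_comm (R ^ 2)]

/-- Area of the lens formed by two properly intersecting disks, and the resulting
probability that a uniform point of the coverage disk of radius `R` lies in the guard
zone of radius `r` centered at `y₀`, where `‖y₀‖ = d` and `|R − r| < d < R + r`. -/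
theorem uniform_prob_lens
    (R r d : ℝ) (hR : 0 < R) (hr : 0 < r)
    (y₀ : EuclideanSpace ℝ (Fin 2)) (hy : ‖y₀‖ = d)
    (hlo : |R - r| < d) (hhi : d < R + r)
    (φ ψ : ℝ)
    (hφ : φ = Real.arccos ((d ^ 2 + r ^ 2 - R ^ 2) / (2 * d * r)))
    (hψ : ψ = Real.arccos ((R ^ 2 + d ^ 2 - r ^ 2) / (2 * d * R))) :
    volume (Metric.closedBall (0 : EuclideanSpace ℝ (Fin 2)) R ∩ Metric.closedBall y₀ r)
      = ENNReal.ofReal (φ * r ^ 2 + ψ * R ^ 2 - d * R * Real.sin ψ) ∧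
    uniformOnBall R (Metric.closedBall y₀ r)
      = ENNReal.ofReal (φ * r ^ 2 / (π * R ^ 2) + ψ / π - (d / (π * R)) * Real.sin ψ) := by
  have hd : 0 < d := (abs_nonneg _).trans_lt hlo
  have hnorm : ‖y₀‖ = ‖!₂[d, 0]‖ := by simp [EuclideanSpace.norm_eq, hy, sqrt_sq hd.le]
  have hlens : volume (closedBall (0 : EuclideanSpace ℝ (Fin 2)) R ∩ closedBall y₀ r) =
      ENNReal.ofReal (φ * r ^ 2 + ψ * R ^ 2 - d * R * sin ψ) := by
    rw [volume_closedBall_zero_inter_closedBall_eq_of_norm_eq hnorm,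
      volume_closedBall_zero_inter_closedBall_fin_two hR.le hr.le, volume_lens hR hr hlo hhi,
      hφ, hψ]
  refine ⟨hlens, ?_⟩
  rw [uniformOnBall_apply hR.le, hlens, ← ENNReal.ofReal_div_of_pos (by positivity)]
  congr 1
  field_simp
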